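/- arXiv:2511.00431 — 2 statements merged into one kernel-verified Lean document; each statement's English description precedes it below -/
import Mathlib

section
/- Let M be an m × n integer matrix all of whose entries are -1, 0, or 1, viewed as a linear map φ : ℤ^n → ℤ^m. Then the cardinality of the torsion subgroup of coker(φ) is at most min(m!, n!). -/
/-!
Let `r` be the rank of `M`. Pick `r` rows `g` spanning the rational row space and `r` columns `h`
such that the minor `D = M[g, h]` is nonsingular. Restricting vectors to the coordinates `g`
embeds the torsion of `coker M` into `coker M[g, ·]`: if `k • x ∈ im M` and `x|_g ∈ im M[g, ·]`,
we may assume `x|_g = 0`; then `k • x` lies in the column space and vanishes on rows spanning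
the row space, so `k • x = 0`. Since `im D ⊆ im M[g, ·]`, the group `coker M[g, ·]` is a quotient
of `coker D`, which has order `|det D| ≤ r!` by the Leibniz formula, and `r ≤ min m n`.
-/

open Submodule

theorem exists_linearIndependent_comp_span_eq {ι K V : Type*} [DivisionRing K] [AddCommGroup V]
    [Module K V] (u : ι → V) [Module.Finite K (span K (Set.range u))] :
    ∃ (r : ℕ) (g : Fin r → ι), LinearIndependent K (u ∘ g) ∧
      span K (Set.range (u ∘ g)) = span K (Set.range u) := by
  obtain ⟨f, hf, hspan, hli⟩ := exists_fun_fin_finrank_span_eq K (Set.range u)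
  choose g hg using hf
  obtain rfl : u ∘ g = f := funext hg
  exact ⟨_, g, hli, hspan⟩

namespace Matrix

variable {m n ι R : Type*}

abbrev coker [CommRing R] [Fintype n] (A : Matrix m n R) : Type _ :=
  (m → R) ⧸ LinearMap.range A.mulVecLin

section Field

variable {K : Type*} [Field K]

theorem exists_det_submatrix_ne_zero_of_linearIndependent_rows {r : ℕ} [Fintype n]
    (A : Matrix (Fin r) n K) (hA : LinearIndependent K A.row) :
    ∃ h : Fin r → n, (A.submatrix id h).det ≠ 0 := by
  obtain ⟨s, h, hli, hspan⟩ := exists_linearIndependent_comp_span_eq (K := K) A.col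
  obtain rfl : s = r := by
    have := finrank_span_eq_card hli
    rwa [hspan, ← rank_eq_finrank_span_cols, hA.rank_matrix, Fintype.card_fin,
      Fintype.card_fin, eq_comm] at this
  exact ⟨h, ((isUnit_iff_isUnit_det _).mp (linearIndependent_cols_iff_isUnit.mp hli)).ne_zero⟩

theorem exists_maximal_nonsingular_submatrix [Fintype m] [Fintype n] (A : Matrix m n K) :
    ∃ (r : ℕ) (g : Fin r → m) (h : Fin r → n), (A.submatrix g h).det ≠ 0 ∧
      ∀ y, (A *ᵥ y) ∘ g = 0 → A *ᵥ y = 0 := by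
  obtain ⟨r, g, hli, hspan⟩ := exists_linearIndependent_comp_span_eq (K := K) A.row
  obtain ⟨h, hdet⟩ :=
    exists_det_submatrix_ne_zero_of_linearIndependent_rows (A.submatrix g id) hli
  refine ⟨r, g, h, hdet, fun y hy => funext fun i => ?_⟩
  have hi : A i ∈ span K (Set.range (A.row ∘ g)) := hspan ▸ subset_span ⟨i, rfl⟩
  obtain ⟨c, hc⟩ := (mem_span_range_iff_exists_fun K).mp hi
  change A i ⬝ᵥ y = 0
  rw [← hc, sum_dotProduct]
  exact Finset.sum_eq_zero fun k _ => by
    rw [smul_dotProduct, Function.comp_apply, row, show A (g k) ⬝ᵥ y = 0 from congrFun hy k,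
      smul_zero]

end Field

theorem exists_maximal_nonsingular_submatrix_of_isDomain [CommRing R] [IsDomain R]
    [Fintype m] [Fintype n] (A : Matrix m n R) :
    ∃ (r : ℕ) (g : Fin r → m) (h : Fin r → n), (A.submatrix g h).det ≠ 0 ∧
      ∀ y, (A *ᵥ y) ∘ g = 0 → A *ᵥ y = 0 := by
  let f := algebraMap R (FractionRing R)
  have hf : Function.Injective f := IsFractionRing.injective R _
  obtain ⟨r, g, h, hdet, hker⟩ := exists_maximal_nonsingular_submatrix (A.map f)
  refine ⟨r, g, h, fun h0 => hdet ?_, fun y hy => funext fun i => hf ?_⟩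
  · rw [submatrix_map, ← RingHom.mapMatrix_apply, ← RingHom.map_det, h0, map_zero]
  · have hy' : (A.map f *ᵥ (f ∘ y)) ∘ g = 0 := funext fun k => by
      rw [Function.comp_apply, ← RingHom.map_mulVec, ← Function.comp_apply (f := A *ᵥ y), hy]
      simp
    simp [RingHom.map_mulVec, hker _ hy']

theorem injective_of_det_submatrix_ne_zero [CommRing R] [Fintype ι] [DecidableEq ι]
    (A : Matrix m n R) {g : ι → m} {h : ι → n} (hA : (A.submatrix g h).det ≠ 0) :
    Function.Injective g ∧ Function.Injective h := by
  refine ⟨fun i j hij => ?_, fun i j hij => ?_⟩ <;> by_contra hne <;> apply hA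
  · exact det_zero_of_row_eq hne (funext fun k => by simp [hij])
  · exact det_zero_of_column_eq hne fun k => by simp [hij]

theorem range_mulVecLin_submatrix_le [CommSemiring R] [Fintype n] [Fintype ι]
    (A : Matrix m n R) (h : ι → n) :
    LinearMap.range (A.submatrix id h).mulVecLin ≤ LinearMap.range A.mulVecLin := by
  rw [range_mulVecLin, range_mulVecLin]
  exact span_mono (Set.range_comp_subset_range h A.col)

theorem card_torsion_coker_le [CommRing R] [Fintype n] (A : Matrix m n R) {g : ι → m}
    (hg : ∀ y, (A *ᵥ y) ∘ g = 0 → A *ᵥ y = 0) [Finite (A.submatrix g id).coker] :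
    Nat.card (torsion R A.coker) ≤ Nat.card (A.submatrix g id).coker := by
  let π : (m → R) →ₗ[R] ι → R := LinearMap.funLeft R R g
  have hπ : LinearMap.range A.mulVecLin ≤
      (LinearMap.range (A.submatrix g id).mulVecLin).comap π := by
    rintro _ ⟨y, rfl⟩
    exact ⟨y, rfl⟩
  let φ := (mapQ _ _ π hπ).comp (torsion R A.coker).subtype
  refine Nat.card_le_card_of_injective φ ((injective_iff_map_eq_zero φ).mpr ?_)
  rintro ⟨x, hx⟩ hφx
  obtain ⟨⟨k, hk⟩, hkx⟩ := (mem_torsion_iff x).mp hx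
  obtain ⟨z, rfl⟩ := mkQ_surjective _ x
  obtain ⟨y, hy⟩ : k • z ∈ LinearMap.range A.mulVecLin := by
    rwa [← Quotient.mk_eq_zero, Quotient.mk_smul]
  obtain ⟨y', hy'⟩ : π z ∈ LinearMap.range (A.submatrix g id).mulVecLin :=
    (Quotient.mk_eq_zero _).mp hφx
  have hkw : A *ᵥ (y - k • y') = k • (z - A *ᵥ y') := by
    rw [mulVec_sub, mulVec_smul, smul_sub]
    exact congrArg (· - _) hy
  have hw : z - A *ᵥ y' = 0 := by
    have hzg : ∀ i, (A *ᵥ y') (g i) = z (g i) := fun i => congrFun hy' i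
    have hkw0 : k • (z - A *ᵥ y') = 0 := hkw ▸ hg _ (funext fun i => by simp [hkw, hzg])
    exact funext fun i => (mul_left_mem_nonZeroDivisors_eq_zero_iff hk).mp (congrFun hkw0 i)
  refine Subtype.ext ((Quotient.mk_eq_zero _).mpr ⟨y', ?_⟩)
  exact (sub_eq_zero.mp hw).symm

theorem natCard_coker_eq_natAbs_det [Fintype ι] [DecidableEq ι] (D : Matrix ι ι ℤ)
    (hD : D.det ≠ 0) : Nat.card D.coker = D.det.natAbs := by
  have hinj : Function.Injective D.mulVecLin := by
    rw [← LinearMap.ker_eq_bot, LinearMap.ker_eq_bot']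
    by_contra! ⟨v, hv, hv0⟩
    exact hD (exists_mulVec_eq_zero_iff.mp ⟨v, hv0, hv⟩)
  rw [← (LinearMap.range D.mulVecLin).natAbs_det_equiv (LinearEquiv.ofInjective _ hinj),
    ← LinearMap.det_toLin']
  rfl

theorem natAbs_det_le_factorial [Fintype ι] [DecidableEq ι] (D : Matrix ι ι ℤ)
    (hD : ∀ i j, |D i j| ≤ 1) : D.det.natAbs ≤ (Fintype.card ι).factorial := by
  have := det_le (abv := AbsoluteValue.abs) hD
  rw [← Int.ofNat_le, Int.natCast_natAbs]
  simpa using this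

theorem finite_coker_of_det_ne_zero [Fintype ι] [DecidableEq ι] (D : Matrix ι ι ℤ)
    (hD : D.det ≠ 0) : Finite D.coker :=
  Nat.finite_of_card_ne_zero <| by
    rw [natCard_coker_eq_natAbs_det D hD]
    exact Int.natAbs_ne_zero.mpr hD

theorem finite_coker_of_det_submatrix_ne_zero [Fintype n] [Fintype ι] [DecidableEq ι]
    (B : Matrix ι n ℤ) (h : ι → n) (hD : (B.submatrix id h).det ≠ 0) : Finite B.coker :=
  have := finite_coker_of_det_ne_zero _ hD
  Finite.of_surjective _ (factor_surjective (range_mulVecLin_submatrix_le B h))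

theorem natCard_coker_le_natAbs_det_submatrix [Fintype n] [Fintype ι] [DecidableEq ι]
    (B : Matrix ι n ℤ) (h : ι → n) (hD : (B.submatrix id h).det ≠ 0) :
    Nat.card B.coker ≤ (B.submatrix id h).det.natAbs := by
  have := finite_coker_of_det_ne_zero _ hD
  rw [← natCard_coker_eq_natAbs_det _ hD]
  exact Nat.card_le_card_of_surjective _ (factor_surjective (range_mulVecLin_submatrix_le B h))

end Matrix

/-- Let `M` be an `m × n` integer matrix all of whose entries are `-1`, `0`, or `1`,
viewed as a linear map `φ : ℤ^n → ℤ^m`. Then the cardinality of the torsion subgroup of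
`coker φ` is at most `min m! n!`. -/
theorem torsion_coker_card_le (m n : ℕ) (M : Matrix (Fin m) (Fin n) ℤ)
    (hM : ∀ i j, M i j ∈ ({-1, 0, 1} : Set ℤ)) :
    Nat.card (Submodule.torsion ℤ ((Fin m → ℤ) ⧸ LinearMap.range M.mulVecLin)) ≤
      min (Nat.factorial m) (Nat.factorial n) := by
  obtain ⟨r, g, h, hdet, hker⟩ := M.exists_maximal_nonsingular_submatrix_of_isDomain
  obtain ⟨hg, hh⟩ := M.injective_of_det_submatrix_ne_zero hdet
  have hentries : ∀ i j, |M.submatrix g h i j| ≤ 1 := fun i j => by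
    obtain hx | hx | hx : M (g i) (h j) = -1 ∨ M (g i) (h j) = 0 ∨ M (g i) (h j) = 1 :=
      hM (g i) (h j)
    all_goals simp [hx]
  have := (M.submatrix g id).finite_coker_of_det_submatrix_ne_zero h hdet
  calc Nat.card (torsion ℤ M.coker)
      ≤ Nat.card (M.submatrix g id).coker := M.card_torsion_coker_le hker
    _ ≤ (M.submatrix g h).det.natAbs :=
      (M.submatrix g id).natCard_coker_le_natAbs_det_submatrix h hdet
    _ ≤ r.factorial := by simpa using M.submatrix g h |>.natAbs_det_le_factorial hentries
    _ ≤ min m.factorial n.factorial := by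
      refine le_min (Nat.factorial_le ?_) (Nat.factorial_le ?_)
      · simpa using Fintype.card_le_of_injective g hg
      · simpa using Fintype.card_le_of_injective h hh
end

section
/- Let V be a finite-dimensional vector space over a field k with a nondegenerate bilinear pairing ⟨·,·⟩, let G be a group acting linearly on V preserving the pairing, and suppose there is a family of vectors (δ_z)_{z∈Z} spanning V together with group elements σ_z ∈ G and nonzero scalars ε_z satisfying σ_z(γ) = γ + ε_z⟨γ, δ_z⟩δ_z for all γ ∈ V. If all the δ_z are in a single G-orbit (up to scalar) and V ∩ V^⊥ = 0, then V is an irreducible G-representation. -/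
/-- Abstract Picard–Lefschetz irreducibility: if a group `G` acts on `V` preserving a
nondegenerate pairing `B`, the vectors `δ z` span `V`, the elements `σ z` act by
`γ ↦ γ + ε z ⟨γ, δ z⟩ δ z` with `ε z ≠ 0`, and all `δ z` lie in one `G`-orbit up to
nonzero scalar, then every nonzero `G`-stable subspace of `V` equals `V`. -/
theorem vanishing_cycles_irreducible {k V G : Type*} [Field k] [AddCommGroup V]
    [Module k V] [FiniteDimensional k V] [Group G]
    (ρ : Representation k G V) (B : V →ₗ[k] V →ₗ[k] k)
    (hB : ∀ v : V, (∀ w : V, B v w = 0) → v = 0)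
    (hinv : ∀ (g : G) (x y : V), B (ρ g x) (ρ g y) = B x y)
    {Z : Type*} (δ : Z → V) (σ : Z → G) (ε : Z → k)
    (hspan : Submodule.span k (Set.range δ) = ⊤)
    (hε : ∀ z, ε z ≠ 0)
    (hPL : ∀ (z : Z) (γ : V), ρ (σ z) γ = γ + (ε z * B γ (δ z)) • δ z)
    (horb : ∀ z z' : Z, ∃ (g : G) (c : k), c ≠ 0 ∧ ρ g (δ z) = c • δ z') :
    ∀ W : Submodule k V, (∀ (g : G), ∀ w ∈ W, ρ g w ∈ W) → W ≠ ⊥ → W = ⊤ := by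
  intro W hstab hW
  -- pick a nonzero w ∈ W
  obtain ⟨w, hwW, hw0⟩ := Submodule.exists_mem_ne_zero_of_ne_bot hW
  -- find z with B w (δ z) ≠ 0
  have hex : ∃ z, B w (δ z) ≠ 0 := by
    by_contra h
    push_neg at h
    apply hw0
    apply hB
    intro v
    have hv : v ∈ Submodule.span k (Set.range δ) := by rw [hspan]; trivial
    induction hv using Submodule.span_induction with
    | mem x hx => obtain ⟨z, rfl⟩ := hx; exact h z
    | zero => simp
    | add x y _ _ hx hy => simp [hx, hy]
    | smul c x _ hx => simp [hx]
  obtain ⟨z, hz⟩ := hex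
  -- δ z ∈ W
  have hδz : δ z ∈ W := by
    have h1 : ρ (σ z) w - w ∈ W := W.sub_mem (hstab _ _ hwW) hwW
    rw [hPL] at h1
    simp only [add_sub_cancel_left] at h1
    have hc : ε z * B w (δ z) ≠ 0 := mul_ne_zero (hε z) hz
    have := W.smul_mem (ε z * B w (δ z))⁻¹ h1
    rwa [inv_smul_smul₀ hc] at this
  -- all δ z' ∈ W
  have hall : ∀ z', δ z' ∈ W := by
    intro z'
    obtain ⟨g, c, hc, hg⟩ := horb z z'
    have : ρ g (δ z) ∈ W := hstab _ _ hδz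
    rw [hg] at this
    have := W.smul_mem c⁻¹ this
    rwa [inv_smul_smul₀ hc] at this
  rw [← top_le_iff, ← hspan, Submodule.span_le]
  rintro _ ⟨z', rfl⟩
  exact hall z'
end
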